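/- arXiv:2509.02524 — 3 statements merged into one kernel-verified Lean document; each statement's English description precedes it below -/
import Mathlib

section
/- For every (h,x) ∈ ℝ² and t > 0, the functions p and p̂ are symmetric in x: p(h,x;t) = p(h,-x;t) and p̂(h,x;t) = p̂(h,-x;t). -/
open MeasureTheory Filter

noncomputable section

/-- The left wedge contour crossing the real axis at `c`: it runs from `∞·e^{-2πi/3}`
to `∞·e^{2πi/3}` and meets the real axis at `c`. -/
def wedgeL (c : ℝ) (s : ℝ) : ℂ :=
  Complex.ofReal (c - |s| / 2) + Complex.I * Complex.ofReal (s * Real.sqrt 3 / 2)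

/-- The right wedge contour crossing the real axis at `c`: the negation (as a set) of
`wedgeL (-c)`, oriented from `∞·e^{-πi/3}` to `∞·e^{πi/3}`. -/
def wedgeR (c : ℝ) (s : ℝ) : ℂ := -wedgeL (-c) (-s)

/-- The contour `Γ_L`, crossing the real axis at `-1/2 ∈ (-1,0)`. -/
def gammaL : ℝ → ℂ := wedgeL (-1/2)

/-- The contour `Γ_R = -Γ_L`, crossing the real axis at `1/2 ∈ (0,1)`. -/
def gammaR : ℝ → ℂ := wedgeR (1/2)

/-- `f_{h,x;t}(w) = exp(-(t/3)w³ + x·w² + h·w)`. -/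
def fExp (h x t : ℝ) (w : ℂ) : ℂ :=
  Complex.exp (-(t : ℂ) / 3 * w ^ 3 + (x : ℂ) * w ^ 2 + (h : ℂ) * w)

/-- `S_k(W;W') = Σ w_i^k - Σ (w'_i)^k`. -/
def Spow {n n' : ℕ} (k : ℕ) (W : Fin n → ℂ) (W' : Fin n' → ℂ) : ℂ :=
  (∑ i, W i ^ k) - ∑ i, W' i ^ k

/-- `H(W;W') = (1/12)S₁⁴ + (1/4)S₂² - (1/3)S₁S₃`. -/
def Hfun {n n' : ℕ} (W : Fin n → ℂ) (W' : Fin n' → ℂ) : ℂ :=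
  (1 / 12) * Spow 1 W W' ^ 4 + (1 / 4) * Spow 2 W W' ^ 2
    - (1 / 3) * Spow 1 W W' * Spow 3 W W'

/-- The Cauchy determinant `C(W;W') = det[1/(w_i - w'_j)]`. -/
def CauchyDet {n : ℕ} (W W' : Fin n → ℂ) : ℂ :=
  Matrix.det (Matrix.of fun i j => 1 / (W i - W' j))

/-- The integrand `I_n(U;V)` in its explicit product form. -/
def integrandI (n : ℕ) (h x t : ℝ) (U V : Fin n → ℂ) : ℂ :=
  (-1 : ℂ) ^ n * Complex.exp (-(2 / 3 : ℂ) * (t : ℂ) + 2 * (h : ℂ)) *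
    ((∏ i, ∏ j, if i < j then (U i - U j) ^ 2 * (V i - V j) ^ 2 else 1) /
      ∏ i, ∏ j, (U i - V j) ^ 2) *
    (∏ i, ((1 + V i) * (1 - U i) * fExp h x t (U i)) /
      ((1 + U i) * (1 - V i) * fExp h x t (V i))) *
    Hfun (Fin.snoc U 1) (Fin.snoc V (-1))

/-- The integrand `Î_n(U;V) = [2/Σ(-u_i+v_i)]·I_n(U;V)`. -/
def integrandIhat (n : ℕ) (h x t : ℝ) (U V : Fin n → ℂ) : ℂ :=
  (2 / ∑ i, (-U i + V i)) * integrandI n h x t U V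

/-- The `2n`-fold contour integral `∫_{Γ_L^n × Γ_R^n} F(U;V) ∏ du_i/(2πi) ∏ dv_i/(2πi)`. -/
def contourProdIntegral (n : ℕ) (F : (Fin n → ℂ) → (Fin n → ℂ) → ℂ) : ℂ :=
  ∫ sr : (Fin n → ℝ) × (Fin n → ℝ),
    F (fun i => gammaL (sr.1 i)) (fun i => gammaR (sr.2 i)) *
      ((∏ i, deriv gammaL (sr.1 i) / (2 * Real.pi * Complex.I)) *
        ∏ i, deriv gammaR (sr.2 i) / (2 * Real.pi * Complex.I))

/-- `p(h,x;t)` as a complex series of contour integrals. -/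
def pC (h x t : ℝ) : ℂ :=
  ∑' n : ℕ, (1 / (Nat.factorial (n + 1) : ℂ) ^ 2) *
    contourProdIntegral (n + 1) (integrandI (n + 1) h x t)

/-- The joint density function `p(h,x;t)`. -/
def pFun (h x t : ℝ) : ℝ := (pC h x t).re

/-- `p̂(h,x;t)` as a complex series of contour integrals. -/
def pHatC (h x t : ℝ) : ℂ :=
  ∑' n : ℕ, (1 / (Nat.factorial (n + 1) : ℂ) ^ 2) *
    contourProdIntegral (n + 1) (integrandIhat (n + 1) h x t)

/-- The joint density function `p̂(h,x;t)`. -/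
def pHatFun (h x t : ℝ) : ℝ := (pHatC h x t).re




/-! The substitution `(U, V) ↦ (-V, -U)` maps `Γ_L^n × Γ_R^n` onto itself, since `Γ_R = -Γ_L`, and
turns the integrands `I_n`, `Î_n` at `x` into those at `-x`: the Vandermonde and Cauchy factors and
`H(U ⊔ (1); V ⊔ (-1))` are invariant, and `f_{h,x;t}(-w) · f_{h,-x;t}(w) = 1`. -/

open Finset

theorem integral_comp_neg_swap {G E : Type*} [MeasurableSpace G] [AddGroup G] [MeasurableNeg G]
    [NormedAddCommGroup E] [NormedSpace ℝ E] (μ : Measure G) [SFinite μ] [μ.IsNegInvariant]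
    (f : G × G → E) : ∫ p, f (-p.2, -p.1) ∂μ.prod μ = ∫ p, f p ∂μ.prod μ := by
  let e : G × G ≃ᵐ G × G :=
    MeasurableEquiv.prodComm.trans ((MeasurableEquiv.neg G).prodCongr (MeasurableEquiv.neg G))
  have he : MeasurePreserving e (μ.prod μ) (μ.prod μ) :=
    ((Measure.measurePreserving_neg μ).prod (Measure.measurePreserving_neg μ)).comp
      Measure.measurePreserving_swap
  exact he.integral_comp' f

theorem gammaR_apply (s : ℝ) : gammaR s = -gammaL (-s) := by
  rw [gammaR, gammaL, wedgeR, neg_div]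

theorem deriv_gammaR (s : ℝ) : deriv gammaR s = deriv gammaL (-s) := by
  rw [show gammaR = fun s => -gammaL (-s) from funext gammaR_apply, deriv.fun_neg,
    deriv_comp_neg, neg_neg]

theorem contourProdIntegral_comp_neg_swap (n : ℕ) (F : (Fin n → ℂ) → (Fin n → ℂ) → ℂ) :
    contourProdIntegral n (fun U V => F (-V) (-U)) = contourProdIntegral n F := by
  unfold contourProdIntegral
  rw [Measure.volume_eq_prod]
  conv_rhs => rw [← integral_comp_neg_swap]
  congr 1 with sr
  have hL : -(fun i => gammaR (sr.2 i)) = fun i => gammaL (-sr.2 i) := by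
    ext i; simp [gammaR_apply]
  have hR : -(fun i => gammaL (sr.1 i)) = fun i => gammaR (-sr.1 i) := by
    ext i; simp [gammaR_apply]
  simp only [hL, hR, Pi.neg_apply, deriv_gammaR, neg_neg]
  ring

theorem fExp_neg_x (h x t : ℝ) (w : ℂ) : fExp h (-x) t w = (fExp h x t (-w))⁻¹ := by
  rw [fExp, fExp, ← Complex.exp_neg]
  push_cast
  ring_nf

theorem Spow_neg_swap {n n' : ℕ} (k : ℕ) (W : Fin n → ℂ) (W' : Fin n' → ℂ) :
    Spow k (-W') (-W) = (-1) ^ (k + 1) * Spow k W W' := by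
  simp only [Spow, Pi.neg_apply, neg_pow (W _), neg_pow (W' _), ← mul_sum]
  ring

theorem Hfun_neg_swap {n n' : ℕ} (W : Fin n → ℂ) (W' : Fin n' → ℂ) :
    Hfun (-W') (-W) = Hfun W W' := by
  simp only [Hfun, Spow_neg_swap]
  ring

theorem neg_snoc {n : ℕ} (W : Fin n → ℂ) (c : ℂ) :
    -(Fin.snoc W c : Fin (n + 1) → ℂ) = Fin.snoc (-W) (-c) :=
  Fin.comp_snoc Neg.neg W c

theorem integrandI_neg_swap (n : ℕ) (h x t : ℝ) (U V : Fin n → ℂ) :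
    integrandI n h x t (-V) (-U) = integrandI n h (-x) t U V := by
  have hVandermonde : (∏ i, ∏ j, if i < j then ((-V) i - (-V) j) ^ 2 * ((-U) i - (-U) j) ^ 2
      else 1) = ∏ i, ∏ j, if i < j then (U i - U j) ^ 2 * (V i - V j) ^ 2 else 1 := by
    refine prod_congr rfl fun i _ => prod_congr rfl fun j _ => ?_
    split_ifs
    · simp only [Pi.neg_apply]; ring
    · rfl
  have hCauchy : ∏ i, ∏ j, ((-V) i - (-U) j) ^ 2 = ∏ i, ∏ j, (U i - V j) ^ 2 := by
    rw [Finset.prod_comm]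
    exact prod_congr rfl fun i _ => prod_congr rfl fun j _ => by simp only [Pi.neg_apply]; ring
  have hWeight : (∏ i, (1 + (-U) i) * (1 - (-V) i) * fExp h x t ((-V) i)
        / ((1 + (-V) i) * (1 - (-U) i) * fExp h x t ((-U) i)))
      = ∏ i, (1 + V i) * (1 - U i) * fExp h (-x) t (U i)
        / ((1 + U i) * (1 - V i) * fExp h (-x) t (V i)) := by
    refine prod_congr rfl fun i _ => ?_
    simp only [Pi.neg_apply, fExp_neg_x, div_eq_mul_inv, mul_inv, inv_inv]
    ring
  have hH :
      Hfun (Fin.snoc (-V) 1) (Fin.snoc (-U) (-1)) = Hfun (Fin.snoc U 1) (Fin.snoc V (-1)) := by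
    rw [← Hfun_neg_swap, neg_snoc, neg_snoc, neg_neg, neg_neg, neg_neg]
  rw [integrandI, integrandI, hVandermonde, hCauchy, hWeight, hH]

theorem integrandIhat_neg_swap (n : ℕ) (h x t : ℝ) (U V : Fin n → ℂ) :
    integrandIhat n h x t (-V) (-U) = integrandIhat n h (-x) t U V := by
  have hSum : ∑ i, (-(-V) i + (-U) i) = ∑ i, (-U i + V i) :=
    sum_congr rfl fun i _ => by simp only [Pi.neg_apply]; ring
  rw [integrandIhat, integrandIhat, integrandI_neg_swap, hSum]

theorem pC_neg (h x t : ℝ) : pC h (-x) t = pC h x t := by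
  unfold pC
  simp only [← contourProdIntegral_comp_neg_swap _ (integrandI _ h x t), integrandI_neg_swap]

theorem pHatC_neg (h x t : ℝ) : pHatC h (-x) t = pHatC h x t := by
  unfold pHatC
  simp only [← contourProdIntegral_comp_neg_swap _ (integrandIhat _ h x t),
    integrandIhat_neg_swap]

theorem p_pHat_symmetric_in_x_general (h x t : ℝ) :
    pFun h x t = pFun h (-x) t ∧ pHatFun h x t = pHatFun h (-x) t := by
  rw [pFun, pFun, pHatFun, pHatFun, pC_neg, pHatC_neg]
  exact ⟨rfl, rfl⟩

/-- `p` and `p̂` are symmetric in `x`. -/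
theorem p_pHat_symmetric_in_x (h x t : ℝ) (ht : 0 < t) :
    pFun h x t = pFun h (-x) t ∧ pHatFun h x t = pHatFun h (-x) t :=
  p_pHat_symmetric_in_x_general h x t

end
end

section
/- Fix n ≥ 1 and complex numbers u_1,…,u_n, v_1,…,v_n ∈ ℂ, and define g: ℝ³ → ℂ by g(h,x,t) := e^{-(2/3)t + 2h} · ∏_{i=1}^n f_{h,x;t}(u_i)/f_{h,x;t}(v_i). Then g is smooth and satisfies ((1/12)·∂_h^4 + (1/4)·∂_x^2 + ∂_h∂_t) g(h,x,t) = H(U⊔(1); V⊔(-1)) · g(h,x,t) for all (h,x,t) ∈ ℝ³, where U = (u_1,…,u_n) and V = (v_1,…,v_n). -/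
open MeasureTheory Filter

noncomputable section

lemma hasDerivAt_expAffine (a k : ℂ) (x : ℝ) :
    HasDerivAt (fun s : ℝ => Complex.exp (a * s + k)) (a * Complex.exp (a * x + k)) x := by
  have h1 : HasDerivAt (fun s : ℝ => (s : ℂ)) 1 x := by
    simpa using (hasDerivAt_id x).ofReal_comp
  have := ((h1.const_mul a).add_const k).cexp
  simpa [mul_comm] using this

lemma iteratedDeriv_expAffine (a k : ℂ) : ∀ (m : ℕ) (x : ℝ),
    iteratedDeriv m (fun s : ℝ => Complex.exp (a * s + k)) x
      = a ^ m * Complex.exp (a * x + k) := by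
  intro m
  induction m with
  | zero => simp
  | succ m ih =>
    intro x
    rw [iteratedDeriv_succ]
    have h2 : iteratedDeriv m (fun s : ℝ => Complex.exp (a * s + k))
        = fun x : ℝ => a ^ m * Complex.exp (a * x + k) := funext ih
    rw [h2]
    rw [((hasDerivAt_expAffine a k x).const_mul (a ^ m)).deriv]; ring

lemma contDiff_expAffine (a b c : ℂ) :
    ContDiff ℝ (⊤ : ℕ∞) (fun p : ℝ × ℝ × ℝ => Complex.exp (a * p.1 + (b * p.2.1 + c * p.2.2))) := by
  apply ContDiff.comp (Complex.contDiff_exp (𝕜 := ℝ))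
  have hre : ContDiff ℝ (⊤ : ℕ∞) (fun r : ℝ => (r : ℂ)) := Complex.ofRealCLM.contDiff
  exact ((contDiff_const.mul (hre.comp contDiff_fst)).add
    ((contDiff_const.mul (hre.comp (contDiff_fst.comp contDiff_snd))).add
      (contDiff_const.mul (hre.comp (contDiff_snd.comp contDiff_snd)))))

lemma keyEq (n : ℕ) (U V : Fin n → ℂ) (h x t : ℝ) :
    Complex.exp (-(2 / 3 : ℂ) * (t : ℂ) + 2 * (h : ℂ)) *
        ∏ i, fExp h x t (U i) / fExp h x t (V i)
      = Complex.exp ((2 + (∑ i, U i - ∑ i, V i)) * h +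
          ((∑ i, U i ^ 2 - ∑ i, V i ^ 2) * x +
            (-(2 / 3) - (1 / 3) * (∑ i, U i ^ 3 - ∑ i, V i ^ 3)) * t)) := by
  unfold fExp
  simp only [← Complex.exp_sub]
  rw [← Complex.exp_sum, ← Complex.exp_add]
  congr 1
  have expand : ∑ i, ((-(t : ℂ) / 3 * U i ^ 3 + x * U i ^ 2 + h * U i)
        - (-(t : ℂ) / 3 * V i ^ 3 + x * V i ^ 2 + h * V i))
      = -(t : ℂ) / 3 * (∑ i, U i ^ 3) + x * (∑ i, U i ^ 2) + h * (∑ i, U i)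
        - (-(t : ℂ) / 3 * (∑ i, V i ^ 3) + x * (∑ i, V i ^ 2) + h * (∑ i, V i)) := by
    simp [Finset.mul_sum, Finset.sum_sub_distrib, Finset.sum_add_distrib]
  rw [expand]; ring

lemma spow_snoc (n : ℕ) (k : ℕ) (U V : Fin n → ℂ) :
    Spow k (Fin.snoc U (1:ℂ)) (Fin.snoc V (-1:ℂ))
      = ((∑ i, U i ^ k) + 1) - ((∑ i, V i ^ k) + (-1) ^ k) := by
  simp [Spow, Fin.sum_univ_castSucc]

/-- The function `g(h,x,t) = e^{-(2/3)t+2h}·∏ f_{h,x;t}(u_i)/f_{h,x;t}(v_i)`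
is smooth and satisfies `((1/12)∂_h⁴ + (1/4)∂_x² + ∂_h∂_t)g = H(U⊔(1);V⊔(-1))·g`. -/
theorem heat_type_equation (n : ℕ) (hn : 1 ≤ n) (U V : Fin n → ℂ) :
    (ContDiff ℝ (⊤ : ℕ∞) (fun p : ℝ × ℝ × ℝ =>
        Complex.exp (-(2 / 3 : ℂ) * (p.2.2 : ℂ) + 2 * (p.1 : ℂ)) *
          ∏ i, fExp p.1 p.2.1 p.2.2 (U i) / fExp p.1 p.2.1 p.2.2 (V i))) ∧
    ∀ h x t : ℝ,
      (1 / 12) * iteratedDeriv 4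
          (fun h' : ℝ => Complex.exp (-(2 / 3 : ℂ) * (t : ℂ) + 2 * (h' : ℂ)) *
            ∏ i, fExp h' x t (U i) / fExp h' x t (V i)) h
        + (1 / 4) * iteratedDeriv 2
          (fun x' : ℝ => Complex.exp (-(2 / 3 : ℂ) * (t : ℂ) + 2 * (h : ℂ)) *
            ∏ i, fExp h x' t (U i) / fExp h x' t (V i)) x
        + deriv (fun h' : ℝ => deriv
            (fun t' : ℝ => Complex.exp (-(2 / 3 : ℂ) * (t' : ℂ) + 2 * (h' : ℂ)) *
              ∏ i, fExp h' x t' (U i) / fExp h' x t' (V i)) t) h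
      = Hfun (Fin.snoc U 1) (Fin.snoc V (-1)) *
          (Complex.exp (-(2 / 3 : ℂ) * (t : ℂ) + 2 * (h : ℂ)) *
            ∏ i, fExp h x t (U i) / fExp h x t (V i)) := by
  set A : ℂ := 2 + (∑ i, U i - ∑ i, V i) with hA
  set B : ℂ := ∑ i, U i ^ 2 - ∑ i, V i ^ 2 with hB
  set C : ℂ := -(2 / 3) - (1 / 3) * (∑ i, U i ^ 3 - ∑ i, V i ^ 3) with hC
  constructor
  · have hfe : (fun p : ℝ × ℝ × ℝ =>
        Complex.exp (-(2 / 3 : ℂ) * (p.2.2 : ℂ) + 2 * (p.1 : ℂ)) *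
          ∏ i, fExp p.1 p.2.1 p.2.2 (U i) / fExp p.1 p.2.1 p.2.2 (V i))
        = fun p : ℝ × ℝ × ℝ => Complex.exp (A * p.1 + (B * p.2.1 + C * p.2.2)) := by
      funext p
      rw [keyEq n U V p.1 p.2.1 p.2.2]
    rw [hfe]
    exact contDiff_expAffine A B C
  · intro h x t
    simp only [keyEq n U V]
    have e2 : (fun x' : ℝ => Complex.exp (A * (h:ℂ) + (B * (x':ℂ) + C * (t:ℂ))))
        = fun x' : ℝ => Complex.exp (B * (x':ℂ) + (A * (h:ℂ) + C * (t:ℂ))) := by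
      funext x'; congr 1; ring
    have e3 : ∀ h' : ℝ,
        deriv (fun t' : ℝ => Complex.exp (A * (h':ℂ) + (B * (x:ℂ) + C * (t':ℂ)))) t
          = C * Complex.exp (A * (h':ℂ) + (B * (x:ℂ) + C * (t:ℂ))) := by
      intro h'
      have e : (fun t' : ℝ => Complex.exp (A * (h':ℂ) + (B * (x:ℂ) + C * (t':ℂ))))
          = fun t' : ℝ => Complex.exp (C * (t':ℂ) + (A * (h':ℂ) + B * (x:ℂ))) := by
        funext t'; congr 1; ring
      rw [e, (hasDerivAt_expAffine C (A * (h':ℂ) + B * (x:ℂ)) t).deriv]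
      congr 1; ring
    rw [← hA, ← hB, ← hC]
    simp only [e2, e3]
    rw [iteratedDeriv_expAffine A (B * (x:ℂ) + C * (t:ℂ)) 4 h,
      iteratedDeriv_expAffine B (A * (h:ℂ) + C * (t:ℂ)) 2 x,
      ((hasDerivAt_expAffine A (B * (x:ℂ) + C * (t:ℂ)) h).const_mul C).deriv]
    have eE : Complex.exp (B * (x:ℂ) + (A * (h:ℂ) + C * (t:ℂ)))
        = Complex.exp (A * (h:ℂ) + (B * (x:ℂ) + C * (t:ℂ))) := by
      congr 1; ring
    rw [eE]
    simp only [Hfun, spow_snoc]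
    rw [hA, hB, hC]
    ring


end
end

section
/- For every n ≥ 1 and complex numbers u_1,…,u_n, v_1,…,v_n ∈ ℂ such that u_i ≠ v_j for all i, j, u_i ≠ -1 for all i, and v_i ≠ 1 for all i, one has -2 · C(U;V) · C(V⊔(-1); U⊔(1)) = (-1)^n · [∏_{1≤i<j≤n}(u_i-u_j)^2(v_i-v_j)^2 / ∏_{i=1}^n∏_{j=1}^n(u_i-v_j)^2] · ∏_{i=1}^n (1+v_i)(1-u_i)/((1+u_i)(1-v_i)), where U = (u_1,…,u_n) and V = (v_1,…,v_n). (This is the identity showing that the Cauchy-determinant form of the integrand I_n equals its explicit product form.) -/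
/-!
Pivoting a Cauchy matrix `[1/(x_i - y_j)]` on its last entry `1/(a - b)` leaves as Schur
complement the smaller Cauchy matrix with rescaled rows and columns, because
`1/(x - y) - (a - b)/((x - b)(a - y)) = (a - x)(y - b)/((x - b)(a - y)(x - y))`.
By induction this gives Cauchy's product formula for `C(U;V)`, and with `a = 1`, `b = -1` it
expresses `C(U⊔(1);V⊔(-1))` through `C(U;V)`. Finally
`C(V⊔(-1);U⊔(1)) = (-1)^(n+1) C(U⊔(1);V⊔(-1))`, as the two matrices differ by transposition
and a sign.
-/

open MeasureTheory Filter

noncomputable section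

open Finset

namespace Matrix

variable {R : Type*} [CommRing R] {n : ℕ}

theorem det_eq_mul_det_submatrix_castSucc (A : Matrix (Fin (n + 1)) (Fin (n + 1)) R)
    (h : ∀ i : Fin n, A i.castSucc (Fin.last n) = 0) :
    A.det = A (Fin.last n) (Fin.last n) * (A.submatrix Fin.castSucc Fin.castSucc).det := by
  rw [det_succ_column A (Fin.last n), sum_eq_single (Fin.last n)]
  · simp [← two_mul, pow_mul, Fin.succAbove_last]
  · intro i _ hi
    obtain ⟨i, rfl⟩ := Fin.exists_castSucc_eq.mpr hi
    rw [h i, mul_zero, zero_mul]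
  · simp

theorem det_eq_mul_det_schurComplement_last {K : Type*} [Field K]
    (A : Matrix (Fin (n + 1)) (Fin (n + 1)) K)
    (h : A (Fin.last n) (Fin.last n) ≠ 0) :
    A.det = A (Fin.last n) (Fin.last n) * (of fun i j : Fin n => A i.castSucc j.castSucc -
      A i.castSucc (Fin.last n) * A (Fin.last n) j.castSucc / A (Fin.last n) (Fin.last n)).det := by
  let c : Fin (n + 1) → K :=
    Fin.lastCases 0 fun i => A i.castSucc (Fin.last n) / A (Fin.last n) (Fin.last n)
  let B : Matrix (Fin (n + 1)) (Fin (n + 1)) K := of fun i j => A i j - c i * A (Fin.last n) j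
  have hB : A.det = B.det :=
    det_eq_of_forall_row_eq_smul_add_const c (Fin.last n) (by simp [c]) fun i j => by
      simp [B, c]
  rw [hB, det_eq_mul_det_submatrix_castSucc B fun i => by simp [B, c, h]]
  congr 2
  · simp [B, c]
  · ext i j
    simp only [submatrix_apply, of_apply, Fin.lastCases_castSucc, B, c]
    ring

theorem det_of_mul_mul {m : Type*} [Fintype m] [DecidableEq m] (u v : m → R) (A : Matrix m m R) :
    (of fun i j => u i * v j * A i j).det = (∏ i, u i) * (∏ j, v j) * A.det := by
  rw [mul_assoc, ← det_mul_row v A, ← det_mul_column u]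
  simp only [of_apply, mul_assoc]

end Matrix

namespace Fin

variable {M : Type*} [CommMonoid M] {n : ℕ}

theorem prod_prod_univ_castSucc (f : Fin (n + 1) → Fin (n + 1) → M) :
    ∏ i, ∏ j, f i j = (∏ i : Fin n, ∏ j : Fin n, f i.castSucc j.castSucc) *
      (∏ i : Fin n, f i.castSucc (last n)) * (∏ j : Fin n, f (last n) j.castSucc) *
        f (last n) (last n) := by
  simp only [prod_univ_castSucc, prod_mul_distrib]
  ac_rfl

theorem prod_prod_ite_lt_univ_castSucc (f : Fin (n + 1) → Fin (n + 1) → M) :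
    ∏ i, ∏ j, (if i < j then f i j else 1) =
      (∏ i : Fin n, ∏ j : Fin n, if i < j then f i.castSucc j.castSucc else 1) *
        ∏ i : Fin n, f i.castSucc (last n) := by
  simp [prod_prod_univ_castSucc, castSucc_lt_last, (castSucc_lt_last _).not_gt]

end Fin

open Matrix

section Cauchy

variable {K : Type*} [Field K] {n : ℕ}

def cauchyMatrix (x y : Fin n → K) : Matrix (Fin n) (Fin n) K :=
  of fun i j => (x i - y j)⁻¹

theorem det_cauchyMatrix_swap (x y : Fin n → K) :
    (cauchyMatrix y x).det = (-1) ^ n * (cauchyMatrix x y).det := by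
  have : cauchyMatrix y x = -(cauchyMatrix x y)ᵀ := by
    ext i j
    simp [cauchyMatrix, ← inv_neg]
  rw [this, det_neg, det_transpose, Fintype.card_fin]

theorem det_cauchyMatrix_snoc (x y : Fin n → K) (a b : K) (hxy : ∀ i j, x i ≠ y j)
    (hx : ∀ i, x i ≠ b) (hy : ∀ j, a ≠ y j) (hab : a ≠ b) :
    (cauchyMatrix (Fin.snoc x a) (Fin.snoc y b)).det =
      (∏ i, (a - x i) / (x i - b)) * (∏ j, (y j - b) / (a - y j)) / (a - b) *
        (cauchyMatrix x y).det := by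
  have hcorner : cauchyMatrix (Fin.snoc x a) (Fin.snoc y b) (Fin.last n) (Fin.last n) =
      (a - b)⁻¹ := by
    simp [cauchyMatrix]
  have hschur i j : (x i - y j)⁻¹ - (x i - b)⁻¹ * (a - y j)⁻¹ / (a - b)⁻¹ =
      (a - x i) / (x i - b) * ((y j - b) / (a - y j)) * (x i - y j)⁻¹ := by
    have := sub_ne_zero.mpr (hxy i j)
    have := sub_ne_zero.mpr (hx i)
    have := sub_ne_zero.mpr (hy j)
    have := sub_ne_zero.mpr hab
    field_simp
    ring
  rw [det_eq_mul_det_schurComplement_last _ (hcorner ▸ inv_ne_zero (sub_ne_zero.mpr hab)),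
    hcorner, div_eq_inv_mul _ (a - b), mul_assoc, ← det_of_mul_mul]
  simp only [cauchyMatrix, Fin.snoc_castSucc, Fin.snoc_last, of_apply, hschur]

theorem det_cauchyMatrix (x y : Fin n → K) (h : ∀ i j, x i ≠ y j) :
    (cauchyMatrix x y).det =
      (∏ i, ∏ j, if i < j then (x j - x i) * (y i - y j) else 1) /
        ∏ i, ∏ j, (x i - y j) := by
  induction n with
  | zero => simp
  | succ n ih =>
    obtain ⟨x, a, rfl⟩ : ∃ x' a, x = Fin.snoc x' a := ⟨_, _, (Fin.snoc_init_self x).symm⟩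
    obtain ⟨y, b, rfl⟩ : ∃ y' b, y = Fin.snoc y' b := ⟨_, _, (Fin.snoc_init_self y).symm⟩
    have hxy i j : x i ≠ y j := by simpa using h i.castSucc j.castSucc
    rw [det_cauchyMatrix_snoc x y a b hxy (fun i => by simpa using h i.castSucc (Fin.last n))
        (fun j => by simpa using h (Fin.last n) j.castSucc)
        (by simpa using h (Fin.last n) (Fin.last n)),
      ih x y hxy, Fin.prod_prod_ite_lt_univ_castSucc, Fin.prod_prod_univ_castSucc]
    simp only [Fin.snoc_castSucc, Fin.snoc_last, div_eq_mul_inv, prod_mul_distrib,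
      prod_inv_distrib, mul_inv]
    ring

end Cauchy

theorem cauchyDet_eq_det_cauchyMatrix {n : ℕ} (x y : Fin n → ℂ) :
    CauchyDet x y = (cauchyMatrix x y).det := by
  simp [CauchyDet, cauchyMatrix]

theorem cauchy_det_product_form_general (n : ℕ) (U V : Fin n → ℂ)
    (hUV : ∀ i j, U i ≠ V j) (hU : ∀ i, U i ≠ -1) (hV : ∀ i, V i ≠ 1) :
    -2 * CauchyDet U V * CauchyDet (Fin.snoc V (-1)) (Fin.snoc U 1) =
      (-1 : ℂ) ^ n *
        ((∏ i, ∏ j, if i < j then (U i - U j) ^ 2 * (V i - V j) ^ 2 else 1) /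
          ∏ i, ∏ j, (U i - V j) ^ 2) *
        ∏ i, ((1 + V i) * (1 - U i)) / ((1 + U i) * (1 - V i)) := by
  have hnum : (∏ i, ∏ j, if i < j then (U i - U j) ^ 2 * (V i - V j) ^ 2 else 1) =
      (∏ i, ∏ j, if i < j then (U j - U i) * (V i - V j) else 1) ^ 2 := by
    simp only [← prod_pow, ite_pow, one_pow]
    exact prod_congr rfl fun i _ => prod_congr rfl fun j _ => by split_ifs <;> ring
  have hfac : (∏ i, (1 - U i) / (U i - -1)) * (∏ j, (V j - -1) / (1 - V j)) =
      ∏ i, ((1 + V i) * (1 - U i)) / ((1 + U i) * (1 - V i)) := by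
    rw [← prod_mul_distrib]
    exact prod_congr rfl fun i _ => by rw [div_mul_div_comm]; congr 1 <;> ring
  rw [cauchyDet_eq_det_cauchyMatrix, cauchyDet_eq_det_cauchyMatrix,
    det_cauchyMatrix_swap (Fin.snoc U 1),
    det_cauchyMatrix_snoc U V 1 (-1) hUV hU (fun j => (hV j).symm) (by norm_num),
    det_cauchyMatrix U V hUV, hnum, ← hfac]
  simp only [prod_pow]
  ring

/-- The Cauchy-determinant form of the integrand equals its explicit
product form: `-2·C(U;V)·C(V⊔(-1);U⊔(1)) = (-1)^n·[∏(u_i-u_j)²(v_i-v_j)²/∏∏(u_i-v_j)²]·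
∏(1+v_i)(1-u_i)/((1+u_i)(1-v_i))`. -/
theorem cauchy_det_product_form (n : ℕ) (hn : 1 ≤ n) (U V : Fin n → ℂ)
    (hUV : ∀ i j, U i ≠ V j) (hU : ∀ i, U i ≠ -1) (hV : ∀ i, V i ≠ 1) :
    -2 * CauchyDet U V * CauchyDet (Fin.snoc V (-1)) (Fin.snoc U 1) =
      (-1 : ℂ) ^ n *
        ((∏ i, ∏ j, if i < j then (U i - U j) ^ 2 * (V i - V j) ^ 2 else 1) /
          ∏ i, ∏ j, (U i - V j) ^ 2) *
        ∏ i, ((1 + V i) * (1 - U i)) / ((1 + U i) * (1 - V i)) :=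
  cauchy_det_product_form_general n U V hUV hU hV

end
end
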